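/- For all integers j and m, 5·G_{j−1}·G_j·G_{j+1}·G_{j+2}·G_{j+m} = F_{m+2}·G_{j+1}^5 + F_{m−3}·G_j^5 − λ²·(F_{m+2}·G_{j+1} + F_{m−3}·G_j). -/

import Mathlib

/-!
With `a = G j` and `b = G (j + 1)`, every gibonacci value is `G (j + n) = F n * b + F (n - 1) * a`,
and the Cassini expression `G (k + 1) ^ 2 - G k * G (k + 2)` only changes sign under `k ↦ k + 1`,
so `λ² = (b ^ 2 - a * b - a ^ 2) ^ 2`. Expressing `F (m + 2)` and `F (m - 3)` through `F m` and
`F (m - 1)`, both sides become polynomials in `a`, `b`, `F m`, `F (m - 1)`, and they agree.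
-/

def IsGibonacci {R : Type*} [CommRing R] (G : ℤ → R) : Prop :=
  ∀ k : ℤ, G (k + 2) = G (k + 1) + G k

namespace IsGibonacci

variable {R : Type*} [CommRing R] {G H : ℤ → R}

theorem apply_eq (hG : IsGibonacci G) {k l n : ℤ} (hl : l = k + 1 := by ring)
    (hn : n = k + 2 := by ring) : G n = G l + G k := by
  subst hl hn
  exact hG k

theorem const_add (hG : IsGibonacci G) (j : ℤ) : IsGibonacci fun n ↦ G (j + n) :=
  fun _ ↦ hG.apply_eq

theorem mul_add_mul (hG : IsGibonacci G) (hH : IsGibonacci H) (a b : R) :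
    IsGibonacci fun n ↦ a * G n + b * H n :=
  fun k ↦ by linear_combination a * hG k + b * hH k

theorem eq_zero_of_apply_zero_of_apply_one (hG : IsGibonacci G) (h0 : G 0 = 0) (h1 : G 1 = 0)
    (k : ℤ) : G k = 0 := by
  suffices h : ∀ i : ℤ, G i = 0 ∧ G (i + 1) = 0 from (h k).1
  intro i
  induction i using Int.induction_on with
  | zero => exact ⟨h0, h1⟩
  | succ n ih =>
    refine ⟨ih.2, ?_⟩
    linear_combination (hG.apply_eq : G (n + 1 + 1) = G (n + 1) + G n) + ih.2 + ih.1
  | pred n ih =>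
    refine ⟨?_, by rw [sub_add_cancel]; exact ih.1⟩
    linear_combination ih.2 - ih.1 - (hG.apply_eq : G (-n + 1) = G (-n) + G (-n - 1))

theorem ext (hG : IsGibonacci G) (hH : IsGibonacci H) (h0 : G 0 = H 0) (h1 : G 1 = H 1) :
    G = H := by
  funext k
  have hD : IsGibonacci fun n ↦ 1 * G n + -1 * H n := hG.mul_add_mul hH 1 (-1)
  linear_combination hD.eq_zero_of_apply_zero_of_apply_one
    (by linear_combination h0) (by linear_combination h1) k

theorem apply_neg_one {F : ℤ → R} (hF : IsGibonacci F) (hF0 : F 0 = 0) (hF1 : F 1 = 1) :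
    F (-1) = 1 := by
  linear_combination hF1 - hF0 - (hF.apply_eq : F 1 = F 0 + F (-1))

theorem apply_add_eq_fib {F : ℤ → R} (hF : IsGibonacci F) (hF0 : F 0 = 0) (hF1 : F 1 = 1)
    (hG : IsGibonacci G) (j n : ℤ) : G (j + n) = F n * G (j + 1) + F (n - 1) * G j := by
  have hF' : IsGibonacci fun n ↦ F (-1 + n) := hF.const_add (-1)
  have key := (hG.const_add j).ext (hF.mul_add_mul hF' (G (j + 1)) (G j)) ?_ ?_
  · simpa [mul_comm, sub_eq_neg_add] using congrFun key n
  · simp [hF0, hF.apply_neg_one hF0 hF1]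
  · simp [hF0, hF1]

def cassini (G : ℤ → R) (k : ℤ) : R := G (k + 1) ^ 2 - G k * G (k + 2)

theorem cassini_add_one (hG : IsGibonacci G) (k : ℤ) : cassini G (k + 1) = -cassini G k := by
  have h3 : G (k + 1 + 2) = G (k + 2) + G (k + 1) := hG.apply_eq
  rw [cassini, cassini, h3, add_assoc, one_add_one_eq_two, hG k]
  ring

theorem cassini_sq (hG : IsGibonacci G) (k : ℤ) :
    cassini G k ^ 2 = (G 1 ^ 2 - G 0 * G 2) ^ 2 := by
  have hper : Function.Periodic (fun k ↦ cassini G k ^ 2) 1 := fun k ↦ by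
    simp only [hG.cassini_add_one k, neg_sq]
  simpa [cassini] using hper.int_mul_eq k

end IsGibonacci

theorem main_identity (F : ℤ → ℤ) (hF0 : F 0 = 0) (hF1 : F 1 = 1)
    (hF : ∀ k : ℤ, F (k + 2) = F (k + 1) + F k)
    (G : ℤ → ℤ) (hG : ∀ k : ℤ, G (k + 2) = G (k + 1) + G k) (j m : ℤ) :
    5 * (G (j - 1) * G j * G (j + 1) * G (j + 2) * G (j + m)) =
      F (m + 2) * G (j + 1) ^ 5 + F (m - 3) * G j ^ 5 -
        (G 1 ^ 2 - G 0 * G 2) ^ 2 * (F (m + 2) * G (j + 1) + F (m - 3) * G j) := by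
  have hFib : IsGibonacci F := hF
  have hGib : IsGibonacci G := hG
  have hFm2 : F (m + 2) = 2 * F m + F (m - 1) := by
    linear_combination hF m + (hFib.apply_eq : F (m + 1) = F m + F (m - 1))
  have hFm3 : F (m - 3) = 2 * F (m - 1) - F m := by
    linear_combination (hFib.apply_eq : F m = F (m - 1) + F (m - 2)) -
      (hFib.apply_eq : F (m - 1) = F (m - 2) + F (m - 3))
  have hGprev : G (j - 1) = G (j + 1) - G j := by
    linear_combination -(hGib.apply_eq : G (j + 1) = G j + G (j - 1))
  rw [← hGib.cassini_sq j, IsGibonacci.cassini, hFib.apply_add_eq_fib hF0 hF1 hGib j m, hG j,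
    hFm2, hFm3, hGprev]
  ring
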